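/- arXiv:2112.06582 — 3 statements merged into one kernel-verified Lean document; each statement's English description precedes it below -/
import Mathlib

section
/- Let I, O, m be natural numbers, let g_R, g_T : ℝ^I → ℝ^O be functions, and let c ∈ ℝ^I, G ∈ ℝ^{I×m}, P ⊆ ℝ^m be an input star set. Suppose there is a finite family of exact outputs ⟨c_R^k, G_R^k, P_R^k⟩ (k ∈ K) of g_R on ⟨c,G,P⟩ such that the union of the P_R^k over k equals P, and for each k there is a finite family of exact outputs ⟨c_T^{k,j}, G_T^{k,j}, P_T^{k,j}⟩ (j ∈ J_k) of g_T on ⟨c,G,P_R^k⟩ such that the union of the P_T^{k,j} over j equals P_R^k. Then the union over all k, j of the sets {(c_R^k + G_R^k α, c_T^{k,j} + G_T^{k,j} α) | α ∈ P_T^{k,j}} equals {(g_R(x), g_T(x)) | x ∈ ⟦⟨c,G,P⟩⟧}. -/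
/-!
Each exact output of `gR` describes `gR ∘ (c + G ·)` on its piece `PR k`, and each exact output of
`gT` on `⟨c, G, PR k⟩` describes `gT ∘ (c + G ·)` on its piece `PT k j`. Since the pieces cover
`P`, resp. `PR k`, gluing the affine descriptions piece by piece recovers the image of `P` under
`α ↦ (gR (c + Gα), gT (c + Gα))`, first on each `PR k` and then on all of `P`.
-/

open Set

theorem Set.setOf_exists_mem_eq_image {α β : Type*} (s : Set α) (f : α → β) :
    {b | ∃ a ∈ s, b = f a} = f '' s := by
  ext b
  simp [eq_comm]

theorem Set.iUnion_image_eq_image_of_eqOn {ι α β : Type*} {s : ι → Set α} {t : Set α}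
    (hcover : ⋃ i, s i = t) {f : α → β} {F : ι → α → β} (hF : ∀ i, EqOn f (F i) (s i)) :
    ⋃ i, F i '' s i = f '' t := by
  rw [← hcover, image_iUnion]
  exact iUnion_congr fun i => (hF i).image_eq.symm

theorem nn_output_correspondence_family_general
    (I O m : ℕ) (gR gT : (Fin I → ℝ) → (Fin O → ℝ))
    (c : Fin I → ℝ) (G : Matrix (Fin I) (Fin m) ℝ) (P : Set (Fin m → ℝ))
    (K : Type)
    (cR : K → Fin O → ℝ) (GR : K → Matrix (Fin O) (Fin m) ℝ)
    (PR : K → Set (Fin m → ℝ))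
    (hR : ∀ k, ∀ α ∈ PR k, gR (c + G.mulVec α) = cR k + (GR k).mulVec α)
    (hPRcover : (⋃ k, PR k) = P)
    (J : K → Type)
    (cT : (k : K) → J k → Fin O → ℝ) (GT : (k : K) → J k → Matrix (Fin O) (Fin m) ℝ)
    (PT : (k : K) → J k → Set (Fin m → ℝ))
    (hT : ∀ k (j : J k), ∀ α ∈ PT k j, gT (c + G.mulVec α) = cT k j + (GT k j).mulVec α)
    (hPTcover : ∀ k, (⋃ j : J k, PT k j) = PR k) :
    (⋃ k, ⋃ j : J k,
        {p : (Fin O → ℝ) × (Fin O → ℝ) |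
          ∃ α ∈ PT k j, p = (cR k + (GR k).mulVec α, cT k j + (GT k j).mulVec α)}) =
    {p : (Fin O → ℝ) × (Fin O → ℝ) |
        ∃ x ∈ {y : Fin I → ℝ | ∃ α ∈ P, y = c + G.mulVec α}, p = (gR x, gT x)} := by
  set x : (Fin m → ℝ) → Fin I → ℝ := fun α => c + G.mulVec α
  set glued : K → (Fin m → ℝ) → (Fin O → ℝ) × (Fin O → ℝ) :=
    fun k α => (cR k + (GR k).mulVec α, gT (x α))
  have h_piece : ∀ k, ⋃ j : J k,
      (fun α => (cR k + (GR k).mulVec α, cT k j + (GT k j).mulVec α)) '' PT k j =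
        glued k '' PR k := fun k =>
    iUnion_image_eq_image_of_eqOn (hPTcover k) fun j α hα => by simp [glued, x, hT k j α hα]
  have h_total : ⋃ k, glued k '' PR k = (fun α => (gR (x α), gT (x α))) '' P :=
    iUnion_image_eq_image_of_eqOn hPRcover fun k α hα => by simp [glued, x, hR k α hα]
  simp only [setOf_exists_mem_eq_image, image_image]
  rw [← h_total]
  exact iUnion_congr h_piece

/-- Output correspondence for families of exact outputs covering the input predicate. -/
theorem nn_output_correspondence_family
    (I O m : ℕ) (gR gT : (Fin I → ℝ) → (Fin O → ℝ))
    (c : Fin I → ℝ) (G : Matrix (Fin I) (Fin m) ℝ) (P : Set (Fin m → ℝ))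
    (K : Type) [Fintype K]
    (cR : K → Fin O → ℝ) (GR : K → Matrix (Fin O) (Fin m) ℝ)
    (PR : K → Set (Fin m → ℝ))
    (hPRsub : ∀ k, PR k ⊆ P)
    (hR : ∀ k, ∀ α ∈ PR k, gR (c + G.mulVec α) = cR k + (GR k).mulVec α)
    (hPRcover : (⋃ k, PR k) = P)
    (J : K → Type) [∀ k, Fintype (J k)]
    (cT : (k : K) → J k → Fin O → ℝ) (GT : (k : K) → J k → Matrix (Fin O) (Fin m) ℝ)
    (PT : (k : K) → J k → Set (Fin m → ℝ))
    (hPTsub : ∀ k (j : J k), PT k j ⊆ PR k)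
    (hT : ∀ k (j : J k), ∀ α ∈ PT k j, gT (c + G.mulVec α) = cT k j + (GT k j).mulVec α)
    (hPTcover : ∀ k, (⋃ j : J k, PT k j) = PR k) :
    (⋃ k, ⋃ j : J k,
        {p : (Fin O → ℝ) × (Fin O → ℝ) |
          ∃ α ∈ PT k j, p = (cR k + (GR k).mulVec α, cT k j + (GT k j).mulVec α)}) =
    {p : (Fin O → ℝ) × (Fin O → ℝ) |
        ∃ x ∈ {y : Fin I → ℝ | ∃ α ∈ P, y = c + G.mulVec α}, p = (gR x, gT x)} :=
  nn_output_correspondence_family_general I O m gR gT c G P K cR GR PR hR hPRcover J cT GT PT hT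
    hPTcover
end

section
/- Let c ∈ ℝ^n, G ∈ ℝ^{n×m}, P ⊆ ℝ^m define a generalized star set, let i be a coordinate index, and let f_i : ℝ^n → ℝ^n be the map that replaces the i-th coordinate of x by max(0, x_i) and leaves all other coordinates unchanged. Let P⁺ = {α ∈ P | (c + Gα)_i ≥ 0} and P⁻ = {α ∈ P | (c + Gα)_i ≤ 0}, and let D ∈ ℝ^{n×n} be the identity matrix with the i-th row replaced by zeros. Then the image of ⟦⟨c,G,P⟩⟧ under f_i equals ⟦⟨c, G, P⁺⟩⟧ ∪ ⟦⟨Dc, DG, P⁻⟩⟧. -/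
/-
The ReLU at neuron `i` fixes a point `c + Gα` with `(c + Gα)ᵢ ≥ 0`, and zeroes the `i`-th coordinate
of one with `(c + Gα)ᵢ ≤ 0`, i.e. sends it to `D(c + Gα) = Dc + (DG)α`. Every `α ∈ P` falls in one
of the two cases, and on each piece the ReLU agrees with the affine map describing that piece.
-/

/-- The identity matrix with the `i`-th row replaced by zeros. -/
def zeroRowId (n : ℕ) (i : Fin n) : Matrix (Fin n) (Fin n) ℝ :=
  Matrix.of fun r s => if r = i then 0 else if r = s then 1 else 0

open Function Matrix

section UpdateMaxZero

variable {ι R : Type*} [DecidableEq ι] [Zero R] [LinearOrder R] (x : ι → R) (i : ι)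

lemma update_max_zero_of_nonneg (h : 0 ≤ x i) : update x i (max 0 (x i)) = x := by
  rw [max_eq_right h, update_eq_self]

lemma update_max_zero_of_nonpos (h : x i ≤ 0) : update x i (max 0 (x i)) = update x i 0 := by
  rw [max_eq_left h]

end UpdateMaxZero

lemma zeroRowId_mulVec (n : ℕ) (i : Fin n) (v : Fin n → ℝ) :
    zeroRowId n i *ᵥ v = update v i 0 := by
  ext r
  by_cases h : r = i <;> simp [zeroRowId, mulVec, dotProduct, h]

lemma zeroRowId_mulVec_add_mul_mulVec (n m : ℕ) (i : Fin n) (c : Fin n → ℝ)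
    (G : Matrix (Fin n) (Fin m) ℝ) (α : Fin m → ℝ) :
    zeroRowId n i *ᵥ c + (zeroRowId n i * G) *ᵥ α = update (c + G *ᵥ α) i 0 := by
  rw [← mulVec_mulVec, ← mulVec_add, zeroRowId_mulVec]

/-- Exact ReLU split of a star set at neuron `i`. -/
theorem star_set_relu_split
    (n m : ℕ) (c : Fin n → ℝ) (G : Matrix (Fin n) (Fin m) ℝ) (P : Set (Fin m → ℝ))
    (i : Fin n) :
    (fun x : Fin n → ℝ => Function.update x i (max 0 (x i))) ''
        {x : Fin n → ℝ | ∃ α ∈ P, x = c + G.mulVec α} =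
    {x : Fin n → ℝ | ∃ α ∈ {α ∈ P | 0 ≤ (c + G.mulVec α) i}, x = c + G.mulVec α} ∪
    {x : Fin n → ℝ | ∃ α ∈ {α ∈ P | (c + G.mulVec α) i ≤ 0},
        x = (zeroRowId n i).mulVec c + (zeroRowId n i * G).mulVec α} := by
  ext x
  constructor
  · rintro ⟨_, ⟨α, hα, rfl⟩, rfl⟩
    rcases le_total 0 ((c + G *ᵥ α) i) with h | h
    · exact Or.inl ⟨α, ⟨hα, h⟩, update_max_zero_of_nonneg _ i h⟩
    · exact Or.inr ⟨α, ⟨hα, h⟩, (update_max_zero_of_nonpos _ i h).trans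
        (zeroRowId_mulVec_add_mul_mulVec n m i c G α).symm⟩
  · rintro (⟨α, ⟨hα, h⟩, rfl⟩ | ⟨α, ⟨hα, h⟩, rfl⟩)
    · exact ⟨_, ⟨α, hα, rfl⟩, update_max_zero_of_nonneg _ i h⟩
    · exact ⟨_, ⟨α, hα, rfl⟩, (update_max_zero_of_nonpos _ i h).trans
        (zeroRowId_mulVec_add_mul_mulVec n m i c G α).symm⟩
end

section
/- Let I, O, p, q be natural numbers with O ≥ 1, let g : ℝ^I → ℝ^O be any function, let C₁ ∈ ℝ^{p×I}, b₁ ∈ ℝ^p, C₂ ∈ ℝ^{q×O}, b₂ ∈ ℝ^q, and let ε > 0. For x ∈ ℝ^I define d_max(x) as the maximum of 0 together with all values max(0, (C₁x − b₁)_k + ε) for k ∈ {1,…,p} and max(0, (C₂ g(x) − b₂)_l + ε) for l ∈ {1,…,q}, and define d*(x) = max(0, 2ε − d_max(x)). Then for every x ∈ ℝ^I: ‖(g(x) + d*(x)·𝟙) − g(x)‖_∞ ≥ ε if and only if (C₁x)_k ≤ (b₁)_k for all k and (C₂ g(x))_l ≤ (b₂)_l for all l, where 𝟙 ∈ ℝ^O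 is the all-ones vector and ‖v‖_∞ = max_i |v_i|. -/
/-- Maximum of 0 together with the ReLU-encoded slacks of the input and output
constraints of a Net-Verify instance. -/
noncomputable def dMax (I O p q : ℕ) (g : (Fin I → ℝ) → (Fin O → ℝ))
    (C₁ : Matrix (Fin p) (Fin I) ℝ) (b₁ : Fin p → ℝ)
    (C₂ : Matrix (Fin q) (Fin O) ℝ) (b₂ : Fin q → ℝ)
    (ε : ℝ) (x : Fin I → ℝ) : ℝ :=
  max
    (Finset.univ.fold max 0 fun k : Fin p => max 0 ((C₁.mulVec x - b₁) k + ε))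
    (Finset.univ.fold max 0 fun l : Fin q => max 0 ((C₂.mulVec (g x) - b₂) l + ε))

/-- The deviation added to the second network's output in the reduction. -/
noncomputable def dStar (I O p q : ℕ) (g : (Fin I → ℝ) → (Fin O → ℝ))
    (C₁ : Matrix (Fin p) (Fin I) ℝ) (b₁ : Fin p → ℝ)
    (C₂ : Matrix (Fin q) (Fin O) ℝ) (b₂ : Fin q → ℝ)
    (ε : ℝ) (x : Fin I → ℝ) : ℝ :=
  max 0 (2 * ε - dMax I O p q g C₁ b₁ C₂ b₂ ε x)

/-!
Subtracting `g x` leaves the constant vector `d*(x)·𝟙`, whose sup norm is `d*(x)` since `O ≥ 1`.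
For `ε > 0` one has `ε ≤ max 0 (2ε - d_max)` iff `d_max ≤ ε`, and a ReLU slack `max 0 (s + ε)`
stays below `ε` iff `s ≤ 0`, i.e. iff the corresponding constraint holds.
-/

lemma max_zero_add_le_self_iff {s ε : ℝ} (hε : 0 ≤ ε) : max 0 (s + ε) ≤ ε ↔ s ≤ 0 := by
  rw [max_le_iff, and_iff_right hε, add_le_iff_nonpos_left]

lemma fold_max_relu_slack_le_iff {ι : Type*} [Fintype ι] (s : ι → ℝ) {ε : ℝ} (hε : 0 ≤ ε) :
    Finset.univ.fold max 0 (fun i => max 0 (s i + ε)) ≤ ε ↔ ∀ i, s i ≤ 0 := by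
  simp only [Finset.fold_max_le, Finset.mem_univ, true_implies, max_zero_add_le_self_iff hε,
    and_iff_right hε]

lemma dMax_le_iff (I O p q : ℕ) (g : (Fin I → ℝ) → (Fin O → ℝ))
    (C₁ : Matrix (Fin p) (Fin I) ℝ) (b₁ : Fin p → ℝ)
    (C₂ : Matrix (Fin q) (Fin O) ℝ) (b₂ : Fin q → ℝ)
    {ε : ℝ} (hε : 0 ≤ ε) (x : Fin I → ℝ) :
    dMax I O p q g C₁ b₁ C₂ b₂ ε x ≤ ε ↔
      (∀ k, C₁.mulVec x k ≤ b₁ k) ∧ (∀ l, C₂.mulVec (g x) l ≤ b₂ l) := by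
  simp only [dMax, max_le_iff, fold_max_relu_slack_le_iff _ hε, Pi.sub_apply, sub_nonpos]

lemma le_max_zero_two_mul_sub_iff {ε d : ℝ} (hε : 0 < ε) : ε ≤ max 0 (2 * ε - d) ↔ d ≤ ε := by
  rw [le_max_iff, or_iff_right hε.not_ge]
  constructor <;> intro h <;> linarith

lemma norm_add_const_sub_self {ι : Type*} [Fintype ι] [Nonempty ι] (v : ι → ℝ) (c : ℝ) :
    ‖(v + fun _ => c) - v‖ = |c| := by
  rw [add_sub_cancel_left, pi_norm_const, Real.norm_eq_abs]

/-- Correctness of the reduction from Net-Verify to ε-Net-Equiv: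
ε-equivalence (w.r.t. the Chebyshev norm) is violated at `x` exactly when `x`
satisfies all input and output constraints of the Net-Verify instance. -/
theorem netverify_reduction_correct
    (I O p q : ℕ) (hO : 1 ≤ O) (g : (Fin I → ℝ) → (Fin O → ℝ))
    (C₁ : Matrix (Fin p) (Fin I) ℝ) (b₁ : Fin p → ℝ)
    (C₂ : Matrix (Fin q) (Fin O) ℝ) (b₂ : Fin q → ℝ)
    (ε : ℝ) (hε : 0 < ε) :
    ∀ x : Fin I → ℝ,
      (ε ≤ ‖(g x + fun _ : Fin O => dStar I O p q g C₁ b₁ C₂ b₂ ε x) - g x‖) ↔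
      ((∀ k : Fin p, C₁.mulVec x k ≤ b₁ k) ∧ (∀ l : Fin q, C₂.mulVec (g x) l ≤ b₂ l)) := by
  intro x
  have : Nonempty (Fin O) := ⟨⟨0, hO⟩⟩
  rw [norm_add_const_sub_self, abs_of_nonneg (le_max_left _ _), dStar,
    le_max_zero_two_mul_sub_iff hε, dMax_le_iff I O p q g C₁ b₁ C₂ b₂ hε.le]
end
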